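/- arXiv:1905.04039 — 5 statements merged into one kernel-verified Lean document; each statement's English description precedes it below -/
import Mathlib

section
/- (Theorem 1, Bayes-optimal classifier for the F_b-score.) For every b > 0, the classifier g*(x) = 1{η(x) > θ*} maximizes the F_b-score over all measurable classifiers g : ℝ^d → {0,1}, where θ* ∈ [0,1] is the unique solution of b² θ P(Y=1) = E[(η(X) − θ)_+]. Moreover, F_b(g*) = θ*. -/
/-!
STATEMENT 4 (Theorem 1, Bayes-optimal classifier for the F_b-score):
For every b > 0, the classifier g*(x) = 1{η(x) > θ*} maximizes the F_b-score over
all measurable classifiers, where θ* ∈ [0,1] is the unique solution of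
b² θ P(Y=1) = E[(η(X) − θ)_+].  Moreover F_b(g*) = θ*.

Encoding: the joint distribution of (X,Y) is given by the marginal μ = P_X and
the regression function η : ℝ^d → [0,1]; then P(Y=1) = ∫ η dμ,
P(Y=1, g(X)=1) = ∫_{g=1} η dμ, P(g(X)=1) = μ{g=1}, and
F_b(g) = (∫_{g=1} η dμ) / (b² ∫ η dμ + μ{g=1}).
-/

open MeasureTheory Set

/-- The (normalized) F_b-score of a classifier `g`. -/
noncomputable def Fscore {d : ℕ} (μ : Measure (EuclideanSpace ℝ (Fin d)))
    (η : EuclideanSpace ℝ (Fin d) → ℝ) (b : ℝ)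
    (g : EuclideanSpace ℝ (Fin d) → Bool) : ℝ :=
  (∫ x in {x | g x = true}, η x ∂μ) /
    (b ^ 2 * (∫ x, η x ∂μ) + (μ {x | g x = true}).toReal)

/-!
For a threshold `θ` and any set `S`, `∫_S η - θ μ(S) = ∫_S (η - θ) ≤ ∫ (η - θ)₊`, with equality
for `S = {θ < η}`. The defining equation of `θ*` turns the right-hand side into
`θ* b² P(Y=1)`, so `P(Y=1, g(X)=1) ≤ θ* (b² P(Y=1) + P(g(X)=1))` for every classifier `g`, with
equality for `g*`: that is, `F_b(g) ≤ θ* = F_b(g*)`.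
-/

namespace MeasureTheory

variable {α : Type*} [MeasurableSpace α] {μ : Measure α} [IsFiniteMeasure μ] {f : α → ℝ}

theorem setIntegral_sub_const_mul_measureReal (hf : Integrable f μ) (θ : ℝ) (S : Set α) :
    ∫ x in S, (f x - θ) ∂μ = ∫ x in S, f x ∂μ - θ * μ.real S := by
  rw [integral_sub hf.integrableOn (integrableOn_const (measure_ne_top μ S)),
    setIntegral_const, smul_eq_mul, mul_comm]

theorem setIntegral_sub_const_mul_measureReal_le_integral_posPart (hf : Integrable f μ)
    (θ : ℝ) (S : Set α) :
    ∫ x in S, f x ∂μ - θ * μ.real S ≤ ∫ x, max (f x - θ) 0 ∂μ := by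
  have hposPart : Integrable (fun x ↦ max (f x - θ) 0) μ := (hf.sub (integrable_const θ)).pos_part
  rw [← setIntegral_sub_const_mul_measureReal hf]
  calc ∫ x in S, (f x - θ) ∂μ
      ≤ ∫ x in S, max (f x - θ) 0 ∂μ :=
        setIntegral_mono (hf.sub (integrable_const θ)).integrableOn hposPart.integrableOn
          fun x ↦ le_max_left _ _
    _ ≤ ∫ x, max (f x - θ) 0 ∂μ :=
        setIntegral_le_integral hposPart (ae_of_all _ fun x ↦ le_max_right _ _)

theorem setIntegral_superlevel_sub_const_mul_measureReal (hf : Integrable f μ) (θ : ℝ) :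
    ∫ x in {x | θ < f x}, f x ∂μ - θ * μ.real {x | θ < f x} = ∫ x, max (f x - θ) 0 ∂μ := by
  have hS : NullMeasurableSet {x | θ < f x} μ :=
    nullMeasurableSet_lt aemeasurable_const hf.aemeasurable
  have hmax : (fun x ↦ max (f x - θ) 0) = {x | θ < f x}.indicator (fun x ↦ f x - θ) := by
    ext x
    by_cases hx : θ < f x
    · simp [hx, hx.le]
    · simp [hx, not_lt.mp hx]
  rw [← setIntegral_sub_const_mul_measureReal hf, hmax, integral_indicator₀ hS]

end MeasureTheory

theorem statement4_general (d : ℕ) (μ : Measure (EuclideanSpace ℝ (Fin d)))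
    [IsProbabilityMeasure μ] (η : EuclideanSpace ℝ (Fin d) → ℝ)
    (hpos : 0 < ∫ x, η x ∂μ) (b : ℝ) (hb : 0 < b)
    (θstar : ℝ)
    (hθeq : b ^ 2 * θstar * ∫ x, η x ∂μ = ∫ x, max (η x - θstar) 0 ∂μ) :
    (∀ g : EuclideanSpace ℝ (Fin d) → Bool, Measurable g →
        Fscore μ η b g ≤ Fscore μ η b (fun x => decide (θstar < η x)))
      ∧ Fscore μ η b (fun x => decide (θstar < η x)) = θstar := by
  have hint : Integrable η μ := .of_integral_ne_zero hpos.ne'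
  have hden : ∀ S, 0 < b ^ 2 * (∫ x, η x ∂μ) + (μ S).toReal := fun S ↦ by positivity
  have hFstar : Fscore μ η b (fun x => decide (θstar < η x)) = θstar := by
    have heq := setIntegral_superlevel_sub_const_mul_measureReal hint θstar
    rw [Fscore, div_eq_iff (hden _).ne']
    simp only [decide_eq_true_eq, measureReal_def] at heq ⊢
    linarith
  refine ⟨fun g _ ↦ ?_, hFstar⟩
  have hle := setIntegral_sub_const_mul_measureReal_le_integral_posPart hint θstar
    {x | g x = true}
  rw [measureReal_def] at hle
  rw [hFstar, Fscore, div_le_iff₀ (hden _)]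
  linarith

theorem statement4 (d : ℕ) (μ : Measure (EuclideanSpace ℝ (Fin d)))
    [IsProbabilityMeasure μ] (η : EuclideanSpace ℝ (Fin d) → ℝ)
    (hη : Measurable η) (hη01 : ∀ x, η x ∈ Icc (0 : ℝ) 1)
    (hpos : 0 < ∫ x, η x ∂μ) (b : ℝ) (hb : 0 < b)
    (θstar : ℝ) (hθmem : θstar ∈ Icc (0 : ℝ) 1)
    (hθeq : b ^ 2 * θstar * ∫ x, η x ∂μ = ∫ x, max (η x - θstar) 0 ∂μ) :
    (∀ g : EuclideanSpace ℝ (Fin d) → Bool, Measurable g →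
        Fscore μ η b g ≤ Fscore μ η b (fun x => decide (θstar < η x)))
      ∧ Fscore μ η b (fun x => decide (θstar < η x)) = θstar :=
  statement4_general d μ η hpos b hb θstar hθeq
end

section
/- (Lemma 1, excess F-score formula.) For every b > 0 and every measurable classifier g : ℝ^d → {0,1}, the excess score 𝓔_b(g) = F_b(g*) − F_b(g) satisfies 𝓔_b(g) = E[|η(X) − θ*| · 1{g*(X) ≠ g(X)}] / (b² P(Y=1) + P(g(X)=1)), where g*(x) = 1{η(x) > θ*}. -/
/-!
Write `A = {η > θ*}` and `B = {g = 1}`. Since `η - θ*` is nonnegative exactly on `A`, the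
defining equation of `θ*` says `∫_A (η - θ*) = b² θ* P(Y=1)`, and for any `B`
  `∫_A (η - θ*) - ∫_B (η - θ*) = ∫_{A ∆ B} |η - θ*|`.
Together these give `θ* (b² P(Y=1) + μ B) - ∫_B η = ∫_{A ∆ B} |η - θ*|`. Taking `B = A`
shows `F_b(g*) = θ*`, and dividing by `b² P(Y=1) + μ B` gives the formula for general `g`.
-/

open MeasureTheory Set

section SignSet

variable {α : Type*} [MeasurableSpace α] {μ : Measure α} {f : α → ℝ} {s t : Set α}

theorem integral_max_zero_eq_setIntegral_of_sign (hs : MeasurableSet s)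
    (hpos : ∀ x ∈ s, 0 ≤ f x) (hneg : ∀ x ∉ s, f x ≤ 0) :
    ∫ x, max (f x) 0 ∂μ = ∫ x in s, f x ∂μ := by
  rw [← setIntegral_eq_integral_of_forall_compl_eq_zero fun x hx => max_eq_right (hneg x hx)]
  exact setIntegral_congr_fun hs fun x hx => max_eq_left (hpos x hx)

theorem setIntegral_sub_setIntegral_eq_setIntegral_symmDiff_abs (hf : Integrable f μ)
    (hs : MeasurableSet s) (ht : MeasurableSet t)
    (hpos : ∀ x ∈ s, 0 ≤ f x) (hneg : ∀ x ∉ s, f x ≤ 0) :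
    ∫ x in s, f x ∂μ - ∫ x in t, f x ∂μ = ∫ x in symmDiff s t, |f x| ∂μ := by
  have hs_split := integral_inter_add_sdiff ht (hf.integrableOn (s := s))
  have ht_split := integral_inter_add_sdiff hs (hf.integrableOn (s := t))
  rw [inter_comm] at ht_split
  have h_st : ∫ x in s \ t, |f x| ∂μ = ∫ x in s \ t, f x ∂μ :=
    setIntegral_congr_fun (hs.diff ht) fun x hx => abs_of_nonneg (hpos x hx.1)
  have h_ts : ∫ x in t \ s, |f x| ∂μ = -∫ x in t \ s, f x ∂μ := by
    rw [← integral_neg]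
    exact setIntegral_congr_fun (ht.diff hs) fun x hx => abs_of_nonpos (hneg x hx.2)
  rw [Set.symmDiff_def, setIntegral_union disjoint_sdiff_sdiff (ht.diff hs)
    hf.abs.integrableOn hf.abs.integrableOn, h_st, h_ts]
  linarith

end SignSet

theorem threshold_mul_sub_setIntegral_eq_setIntegral_symmDiff {α : Type*}
    [MeasurableSpace α] {μ : Measure α} [IsFiniteMeasure μ] {η : α → ℝ}
    (hη : Measurable η) (hη_int : Integrable η μ)
    {b θ : ℝ} (hθ : b ^ 2 * θ * ∫ x, η x ∂μ = ∫ x, max (η x - θ) 0 ∂μ)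
    {B : Set α} (hB : MeasurableSet B) :
    θ * (b ^ 2 * ∫ x, η x ∂μ + μ.real B) - ∫ x in B, η x ∂μ =
      ∫ x in symmDiff {x | θ < η x} B, |η x - θ| ∂μ := by
  have hA : MeasurableSet {x | θ < η x} := measurableSet_lt measurable_const hη
  have hpos : ∀ x ∈ {x | θ < η x}, 0 ≤ η x - θ := fun x hx => sub_nonneg.2 (le_of_lt hx)
  have hneg : ∀ x ∉ {x | θ < η x}, η x - θ ≤ 0 := fun x hx => sub_nonpos.2 (not_lt.1 hx)
  have hA_int : ∫ x in {x | θ < η x}, (η x - θ) ∂μ = b ^ 2 * θ * ∫ x, η x ∂μ := by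
    rw [hθ, integral_max_zero_eq_setIntegral_of_sign hA hpos hneg]
  have hB_int : ∫ x in B, (η x - θ) ∂μ = ∫ x in B, η x ∂μ - μ.real B * θ := by
    rw [integral_sub hη_int.integrableOn (integrableOn_const (measure_lt_top μ B).ne),
      setIntegral_const, smul_eq_mul]
  rw [← setIntegral_sub_setIntegral_eq_setIntegral_symmDiff_abs (f := fun x => η x - θ)
    (hη_int.sub (integrable_const θ)) hA hB hpos hneg, hA_int, hB_int]
  ring

theorem statement5_general (d : ℕ) (μ : Measure (EuclideanSpace ℝ (Fin d)))
    [IsProbabilityMeasure μ] (η : EuclideanSpace ℝ (Fin d) → ℝ)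
    (hη : Measurable η) (hη01 : ∀ x, η x ∈ Icc (0 : ℝ) 1)
    (hpos : 0 < ∫ x, η x ∂μ) (b : ℝ) (hb : 0 < b)
    (θstar : ℝ)
    (hθeq : b ^ 2 * θstar * ∫ x, η x ∂μ = ∫ x, max (η x - θstar) 0 ∂μ)
    (g : EuclideanSpace ℝ (Fin d) → Bool) (hg : Measurable g) :
    Fscore μ η b (fun x => decide (θstar < η x)) - Fscore μ η b g =
      (∫ x in {x | decide (θstar < η x) ≠ g x}, |η x - θstar| ∂μ) /
        (b ^ 2 * (∫ x, η x ∂μ) + (μ {x | g x = true}).toReal) := by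
  have hη_int : Integrable η μ := Integrable.of_bound hη.aestronglyMeasurable 1
    (ae_of_all _ fun x => by
      rw [Real.norm_eq_abs, abs_of_nonneg (hη01 x).1]; exact (hη01 x).2)
  have hden : ∀ s, 0 < b ^ 2 * (∫ x, η x ∂μ) + (μ s).toReal := fun s => by positivity
  have hA := measurableSet_lt (measurable_const (a := θstar)) hη
  have hB : MeasurableSet {x | g x = true} := hg (measurableSet_singleton true)
  have hF_opt : Fscore μ η b (fun x => decide (θstar < η x)) = θstar := by
    have h := threshold_mul_sub_setIntegral_eq_setIntegral_symmDiff hη hη_int hθeq hA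
    rw [symmDiff_self, bot_eq_empty, setIntegral_empty, sub_eq_zero] at h
    simp only [Fscore, decide_eq_true_eq, ← h, measureReal_def]
    field_simp [(hden _).ne']
  have hdisagree : {x | decide (θstar < η x) ≠ g x} =
      symmDiff {x | θstar < η x} {x | g x = true} := by
    ext x
    cases g x <;> by_cases h : θstar < η x <;> simp [Set.mem_symmDiff, h]
  have h := threshold_mul_sub_setIntegral_eq_setIntegral_symmDiff hη hη_int hθeq hB
  rw [hF_opt, hdisagree, ← h, Fscore, measureReal_def]
  field_simp [(hden _).ne']

theorem statement5 (d : ℕ) (μ : Measure (EuclideanSpace ℝ (Fin d)))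
    [IsProbabilityMeasure μ] (η : EuclideanSpace ℝ (Fin d) → ℝ)
    (hη : Measurable η) (hη01 : ∀ x, η x ∈ Icc (0 : ℝ) 1)
    (hpos : 0 < ∫ x, η x ∂μ) (b : ℝ) (hb : 0 < b)
    (θstar : ℝ) (hθmem : θstar ∈ Icc (0 : ℝ) 1)
    (hθeq : b ^ 2 * θstar * ∫ x, η x ∂μ = ∫ x, max (η x - θstar) 0 ∂μ)
    (g : EuclideanSpace ℝ (Fin d) → Bool) (hg : Measurable g) :
    Fscore μ η b (fun x => decide (θstar < η x)) - Fscore μ η b g =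
      (∫ x in {x | decide (θstar < η x) ≠ g x}, |η x - θstar| ∂μ) /
        (b ^ 2 * (∫ x, η x ∂μ) + (μ {x | g x = true}).toReal) :=
  statement5_general d μ η hη hη01 hpos b hb θstar hθeq g hg
end

section
/- (Lemma 2, difference of thresholds, general form.) Let μ and ν be probability measures on a measurable space 𝒳 and let p, q : 𝒳 → [0,1] be measurable functions with ∫ p dμ > 0 and ∫ q dν > 0. Suppose θ ∈ [0,1] satisfies θ ∫ p dμ = ∫ (p − θ)_+ dμ and θ' ∈ [0,1] satisfies θ' ∫ q dν = ∫ (q − θ')_+ dν. Then |θ − θ'| · ∫ p dμ ≤ ∫_0^1 |μ({x : p(x) > t}) − ν({x : q(x) > t})| dt. -/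
/-!
Write `G t = μ(p > t)` and `H t = ν(q > t)`. By the layer cake formula the threshold equations
read `θ ∫₀¹ G = ∫_θ¹ G` and `θ' ∫₀¹ H = ∫_θ'¹ H`, so everything reduces to two nonincreasing
functions on `[0,1]`. The defect `Φ(s) = s ∫₀¹ G - ∫ₛ¹ G` vanishes at `θ` and grows at least at
rate `∫₀¹ G` because `G ≥ 0`, so `|θ - θ'| ∫₀¹ G ≤ |Φ(θ')|`. Subtracting the equation for `θ'`
writes `Φ(θ')` as `θ' ∫₀^θ' (G - H) - (1 - θ') ∫_θ'¹ (G - H)`, which is at most `∫₀¹ |G - H|`.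
-/

open MeasureTheory Set

section ThresholdEquation

variable {g h : ℝ → ℝ} {a b s θ : ℝ}

lemma IntervalIntegrable.of_mem_Icc_zero_one (hg : IntervalIntegrable g volume 0 1)
    (ha : a ∈ Icc (0 : ℝ) 1) (hb : b ∈ Icc (0 : ℝ) 1) : IntervalIntegrable g volume a b :=
  hg.mono_set ((uIcc_subset_Icc ha hb).trans Icc_subset_uIcc)

lemma abs_sub_mul_integral_le_abs_threshold_defect (hg : IntervalIntegrable g volume 0 1)
    (hg0 : ∀ t ∈ Icc (0 : ℝ) 1, 0 ≤ g t) (hθ : θ ∈ Icc (0 : ℝ) 1) (hs : s ∈ Icc (0 : ℝ) 1)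
    (heq : θ * ∫ t in (0 : ℝ)..1, g t = ∫ t in θ..1, g t) :
    |θ - s| * ∫ t in (0 : ℝ)..1, g t ≤ |s * (∫ t in (0 : ℝ)..1, g t) - ∫ t in s..1, g t| := by
  have hI : 0 ≤ ∫ t in (0 : ℝ)..1, g t := intervalIntegral.integral_nonneg zero_le_one hg0
  have hdefect : s * (∫ t in (0 : ℝ)..1, g t) - ∫ t in s..1, g t
      = (s - θ) * (∫ t in (0 : ℝ)..1, g t) + ∫ t in θ..s, g t := by
    have := intervalIntegral.integral_add_adjacent_intervals (hg.of_mem_Icc_zero_one hθ hs)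
      (hg.of_mem_Icc_zero_one hs (right_mem_Icc.2 zero_le_one))
    linarith
  rw [hdefect]
  rcases le_total θ s with hθs | hsθ
  · have : 0 ≤ ∫ t in θ..s, g t := intervalIntegral.integral_nonneg hθs fun t ht =>
      hg0 t ⟨hθ.1.trans ht.1, ht.2.trans hs.2⟩
    rw [abs_of_nonpos (by linarith)]
    exact le_abs.2 (Or.inl (by nlinarith))
  · have : 0 ≤ ∫ t in s..θ, g t := intervalIntegral.integral_nonneg hsθ fun t ht =>
      hg0 t ⟨hs.1.trans ht.1, ht.2.trans hθ.2⟩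
    rw [intervalIntegral.integral_symm s θ, abs_of_nonneg (by linarith)]
    exact le_abs.2 (Or.inr (by nlinarith))

lemma abs_threshold_defect_le_integral_abs_sub (hg : IntervalIntegrable g volume 0 1)
    (hh : IntervalIntegrable h volume 0 1) (hs : s ∈ Icc (0 : ℝ) 1)
    (heq : s * ∫ t in (0 : ℝ)..1, h t = ∫ t in s..1, h t) :
    |s * (∫ t in (0 : ℝ)..1, g t) - ∫ t in s..1, g t| ≤ ∫ t in (0 : ℝ)..1, |g t - h t| := by
  have h0 : (0 : ℝ) ∈ Icc (0 : ℝ) 1 := left_mem_Icc.2 zero_le_one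
  have h1 : (1 : ℝ) ∈ Icc (0 : ℝ) 1 := right_mem_Icc.2 zero_le_one
  have hd := hg.sub hh
  have hleft := intervalIntegral.integral_sub (hg.of_mem_Icc_zero_one h0 hs)
    (hh.of_mem_Icc_zero_one h0 hs)
  have hright := intervalIntegral.integral_sub (hg.of_mem_Icc_zero_one hs h1)
    (hh.of_mem_Icc_zero_one hs h1)
  have hsplit_g := intervalIntegral.integral_add_adjacent_intervals
    (hg.of_mem_Icc_zero_one h0 hs) (hg.of_mem_Icc_zero_one hs h1)
  have hsplit_h := intervalIntegral.integral_add_adjacent_intervals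
    (hh.of_mem_Icc_zero_one h0 hs) (hh.of_mem_Icc_zero_one hs h1)
  have hdefect : s * (∫ t in (0 : ℝ)..1, g t) - ∫ t in s..1, g t
      = s * (∫ t in (0 : ℝ)..s, g t - h t) - (1 - s) * ∫ t in s..1, g t - h t := by
    linear_combination (-s) * hsplit_g + s * hsplit_h + heq - s * hleft + (1 - s) * hright
  have habs_split := intervalIntegral.integral_add_adjacent_intervals
    (hd.of_mem_Icc_zero_one h0 hs).abs (hd.of_mem_Icc_zero_one hs h1).abs
  have hleft_le := intervalIntegral.abs_integral_le_integral_abs (f := fun t => g t - h t)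
    (μ := volume) hs.1
  have hright_le := intervalIntegral.abs_integral_le_integral_abs (f := fun t => g t - h t)
    (μ := volume) hs.2
  have hleft_nn : 0 ≤ ∫ t in (0 : ℝ)..s, |g t - h t| :=
    intervalIntegral.integral_nonneg hs.1 fun _ _ => abs_nonneg _
  have hright_nn : 0 ≤ ∫ t in s..1, |g t - h t| :=
    intervalIntegral.integral_nonneg hs.2 fun _ _ => abs_nonneg _
  rw [hdefect, ← habs_split]
  calc _ ≤ s * |∫ t in (0 : ℝ)..s, g t - h t| + (1 - s) * |∫ t in s..1, g t - h t| := by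
        refine (abs_sub _ _).trans_eq ?_
        rw [abs_mul, abs_mul, abs_of_nonneg hs.1, abs_of_nonneg (sub_nonneg.2 hs.2)]
    _ ≤ _ := by nlinarith [hs.1, hs.2]

theorem abs_sub_mul_integral_le_integral_abs_sub (hg : IntervalIntegrable g volume 0 1)
    (hh : IntervalIntegrable h volume 0 1) (hg0 : ∀ t ∈ Icc (0 : ℝ) 1, 0 ≤ g t)
    {θ θ' : ℝ} (hθ : θ ∈ Icc (0 : ℝ) 1) (hθ' : θ' ∈ Icc (0 : ℝ) 1)
    (heq : θ * ∫ t in (0 : ℝ)..1, g t = ∫ t in θ..1, g t)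
    (heq' : θ' * ∫ t in (0 : ℝ)..1, h t = ∫ t in θ'..1, h t) :
    |θ - θ'| * ∫ t in (0 : ℝ)..1, g t ≤ ∫ t in (0 : ℝ)..1, |g t - h t| :=
  (abs_sub_mul_integral_le_abs_threshold_defect hg hg0 hθ hθ' heq).trans
    (abs_threshold_defect_le_integral_abs_sub hg hh hθ' heq')

end ThresholdEquation

namespace MeasureTheory

variable {α : Type*} [MeasurableSpace α] {μ : Measure α}

lemma antitone_measureReal_lt [IsFiniteMeasure μ] (f : α → ℝ) :
    Antitone fun t => μ.real {x | t < f x} :=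
  fun _ t hst => measureReal_mono fun x (hx : t < f x) => hst.trans_lt hx

lemma Integrable.integral_eq_intervalIntegral_measureReal_lt {f : α → ℝ} {M : ℝ}
    (hf : Integrable f μ) (hf0 : 0 ≤ᵐ[μ] f) (hfM : f ≤ᵐ[μ] fun _ => M) (hM : 0 ≤ M) :
    ∫ x, f x ∂μ = ∫ t in (0 : ℝ)..M, μ.real {x | t < f x} := by
  rw [hf.integral_eq_integral_meas_lt hf0, intervalIntegral.integral_of_le hM]
  apply setIntegral_eq_of_subset_of_ae_sdiff_eq_zero nullMeasurableSet_Ioi Ioc_subset_Ioi_self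
  refine Filter.Eventually.of_forall fun t ht => ?_
  have hMt : M < t := not_le.1 fun htM => ht.2 ⟨ht.1, htM⟩
  rw [measureReal_def, ENNReal.toReal_eq_zero_iff, measure_eq_zero_iff_ae_notMem]
  left
  filter_upwards [hfM] with x hx using (hx.trans_lt hMt).not_gt

lemma integral_max_sub_const_eq_intervalIntegral [IsFiniteMeasure μ] {p : α → ℝ} {M θ : ℝ}
    (hp : AEMeasurable p μ) (hpM : ∀ x, p x ≤ M) (hθM : θ ≤ M) :
    ∫ x, max (p x - θ) 0 ∂μ = ∫ t in θ..M, μ.real {x | t < p x} := by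
  have hint : Integrable (fun x => max (p x - θ) 0) μ :=
    .of_bound ((hp.sub_const θ).max aemeasurable_const).aestronglyMeasurable (M - θ)
      (Filter.Eventually.of_forall fun x => by
        rw [Real.norm_of_nonneg (le_max_right _ _)]
        exact max_le (by linarith [hpM x]) (by linarith))
  rw [hint.integral_eq_intervalIntegral_measureReal_lt (M := M - θ)
      (Filter.Eventually.of_forall fun x => le_max_right _ _)
      (Filter.Eventually.of_forall fun x => max_le (by linarith [hpM x]) (by linarith))
      (by linarith)]
  have hlevel : ∀ t ∈ uIcc 0 (M - θ), {x | t < max (p x - θ) 0} = {x | θ + t < p x} := by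
    intro t ht
    rw [uIcc_of_le (by linarith)] at ht
    ext x
    change t < max (p x - θ) 0 ↔ θ + t < p x
    rw [lt_max_iff]
    constructor
    · rintro (h | h) <;> linarith [ht.1]
    · intro h; left; linarith
  rw [intervalIntegral.integral_congr fun t ht => congrArg μ.real (hlevel t ht),
    intervalIntegral.integral_comp_add_left (fun t => μ.real {x | t < p x}) θ, add_zero,
    add_sub_cancel]

end MeasureTheory

theorem statement6_general {𝒳 : Type*} [MeasurableSpace 𝒳] (μ ν : Measure 𝒳)
    [IsProbabilityMeasure μ] [IsProbabilityMeasure ν]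
    (p q : 𝒳 → ℝ) (hp : Measurable p) (hq : Measurable q)
    (hp01 : ∀ x, p x ∈ Icc (0 : ℝ) 1) (hq01 : ∀ x, q x ∈ Icc (0 : ℝ) 1)
    (θ θ' : ℝ) (hθ : θ ∈ Icc (0 : ℝ) 1) (hθ' : θ' ∈ Icc (0 : ℝ) 1)
    (heq : θ * ∫ x, p x ∂μ = ∫ x, max (p x - θ) 0 ∂μ)
    (heq' : θ' * ∫ x, q x ∂ν = ∫ x, max (q x - θ') 0 ∂ν) :
    |θ - θ'| * ∫ x, p x ∂μ ≤
      ∫ t in (0 : ℝ)..1, |(μ {x | t < p x}).toReal - (ν {x | t < q x}).toReal| := by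
  have hp_int : ∫ x, p x ∂μ = ∫ t in (0 : ℝ)..1, μ.real {x | t < p x} := by
    simpa [fun x => max_eq_left (hp01 x).1] using
      integral_max_sub_const_eq_intervalIntegral (μ := μ) hp.aemeasurable
        (fun x => (hp01 x).2) zero_le_one
  have hq_int : ∫ x, q x ∂ν = ∫ t in (0 : ℝ)..1, ν.real {x | t < q x} := by
    simpa [fun x => max_eq_left (hq01 x).1] using
      integral_max_sub_const_eq_intervalIntegral (μ := ν) hq.aemeasurable
        (fun x => (hq01 x).2) zero_le_one
  rw [integral_max_sub_const_eq_intervalIntegral hp.aemeasurable (fun x => (hp01 x).2) hθ.2,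
    hp_int] at heq
  rw [integral_max_sub_const_eq_intervalIntegral hq.aemeasurable (fun x => (hq01 x).2) hθ'.2,
    hq_int] at heq'
  rw [hp_int]
  exact abs_sub_mul_integral_le_integral_abs_sub (antitone_measureReal_lt p).intervalIntegrable
    (antitone_measureReal_lt q).intervalIntegrable (fun _ _ => measureReal_nonneg) hθ hθ' heq heq'

theorem statement6 {𝒳 : Type*} [MeasurableSpace 𝒳] (μ ν : Measure 𝒳)
    [IsProbabilityMeasure μ] [IsProbabilityMeasure ν]
    (p q : 𝒳 → ℝ) (hp : Measurable p) (hq : Measurable q)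
    (hp01 : ∀ x, p x ∈ Icc (0 : ℝ) 1) (hq01 : ∀ x, q x ∈ Icc (0 : ℝ) 1)
    (hppos : 0 < ∫ x, p x ∂μ) (hqpos : 0 < ∫ x, q x ∂ν)
    (θ θ' : ℝ) (hθ : θ ∈ Icc (0 : ℝ) 1) (hθ' : θ' ∈ Icc (0 : ℝ) 1)
    (heq : θ * ∫ x, p x ∂μ = ∫ x, max (p x - θ) 0 ∂μ)
    (heq' : θ' * ∫ x, q x ∂ν = ∫ x, max (q x - θ') 0 ∂ν) :
    |θ - θ'| * ∫ x, p x ∂μ ≤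
      ∫ t in (0 : ℝ)..1, |(μ {x | t < p x}).toReal - (ν {x | t < q x}).toReal| :=
  statement6_general μ ν p q hp hq hp01 hq01 θ θ' hθ hθ' heq heq'
end

section
/- (Peeling bound.) Suppose P_X(0 < |η(X) − θ*| ≤ δ) ≤ c0 δ^α for every δ > 0 with constants c0 > 0, α > 0, and let η̂ be an estimator based on D_n satisfying the exponential concentration assumption: for all t > 0, P^{⊗n}(|η̂(x) − η(x)| ≥ t) ≤ C1 exp(−C2 a_n t²) for P_X-almost every x. Then there exists a constant C' > 0 depending only on α, c0, C1, C2 such that E_{D_n} E_{X ~ P_X}[ |η(X) − θ*| · 1{|η(X) − θ*| ≤ 2 |η̂(X) − η(X)|} ] ≤ C' a_n^{−(1+α)/2}. -/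
/-!
Write `Z = |η − θ*|` and `D = |η̂ − η|`. By Tonelli the left-hand side is at most
`∫ Z(x) · P_n(Z(x) ≤ 2 D(·, x)) dP_X(x)`. Peel the region `Z > 0` into the base
`0 < Z ≤ δ` and the dyadic shells `2^j δ < Z ≤ 2^{j+1} δ`, with `δ = a^{-1/2}`. On the base
the integrand is at most `δ`, and the margin condition gives mass at most `c0 δ^α`; on the
j-th shell `D ≥ 2^{j-1} δ`, so the integrand is at most `2^{j+1} δ · C1 exp(−C2 4^j / 4)`
against mass at most `c0 (2^{j+1} δ)^α`. Each contribution is `δ^{1+α} = a^{-(1+α)/2}` times a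
term of a series whose ratio test limit is `0`.
-/

open MeasureTheory Set Filter
open scoped ENNReal

lemma exists_mem_Ioc_two_pow_mul {δ z : ℝ} (hδ : 0 < δ) (hz : δ < z) :
    ∃ j : ℕ, z ∈ Ioc (2 ^ j * δ) (2 ^ (j + 1) * δ) := by
  have hex : ∃ n : ℕ, z ≤ 2 ^ n * δ := by
    obtain ⟨n, hn⟩ := pow_unbounded_of_one_lt (z / δ) one_lt_two
    exact ⟨n, ((div_lt_iff₀ hδ).1 hn).le⟩
  classical
  obtain ⟨j, hj⟩ : ∃ j, Nat.find hex = j + 1 :=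
    Nat.exists_eq_succ_of_ne_zero fun h => by
      have := Nat.find_spec hex
      rw [h, pow_zero, one_mul] at this
      linarith
  exact ⟨j, not_le.1 (Nat.find_min hex (by omega)), hj ▸ Nat.find_spec hex⟩

lemma exists_pos_mul_sq_eq_one_and_rpow_eq {a : ℝ} (ha : 0 < a) (p : ℝ) :
    ∃ δ > 0, a * δ ^ 2 = 1 ∧ δ ^ p = a ^ (-p / 2) := by
  refine ⟨a ^ (-(1 : ℝ) / 2), Real.rpow_pos_of_pos ha _, ?_, ?_⟩
  · rw [← Real.rpow_natCast, ← Real.rpow_mul ha.le]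
    norm_num [Real.rpow_neg_one, ha.ne']
  · rw [← Real.rpow_mul ha.le]
    ring_nf

/-- The bound on the contribution of the `j`-th dyadic shell at a scale `δ` with `a δ² = 1`,
divided by `c0 C1 δ^{1+α}`. -/
noncomputable def peelingWeight (α C2 : ℝ) (j : ℕ) : ℝ :=
  ((2 : ℝ) ^ (j + 1)) ^ (1 + α) * Real.exp (-C2 * (2 ^ j / 2) ^ 2)

lemma peelingWeight_pos (α C2 : ℝ) (j : ℕ) : 0 < peelingWeight α C2 j := by
  unfold peelingWeight; positivity

lemma peelingWeight_succ (α C2 : ℝ) (j : ℕ) :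
    peelingWeight α C2 (j + 1)
      = 2 ^ (1 + α) * Real.exp (-(3 * C2 / 4) * (2 ^ j) ^ 2) * peelingWeight α C2 j := by
  unfold peelingWeight
  rw [pow_succ _ (j + 1), mul_comm _ (2 : ℝ), Real.mul_rpow zero_le_two (by positivity),
    pow_succ _ j, mul_assoc, mul_mul_mul_comm, ← Real.exp_add]
  ring_nf

lemma summable_peelingWeight (α : ℝ) {C2 : ℝ} (hC2 : 0 < C2) :
    Summable (peelingWeight α C2) := by
  refine summable_of_ratio_test_tendsto_lt_one zero_lt_one
    (Eventually.of_forall fun j => (peelingWeight_pos α C2 j).ne') ?_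
  have hratio (j : ℕ) : ‖peelingWeight α C2 (j + 1)‖ / ‖peelingWeight α C2 j‖
      = 2 ^ (1 + α) * Real.exp (-(3 * C2 / 4) * (2 ^ j) ^ 2) := by
    rw [Real.norm_of_nonneg (peelingWeight_pos α C2 _).le,
      Real.norm_of_nonneg (peelingWeight_pos α C2 _).le, peelingWeight_succ,
      mul_div_cancel_right₀ _ (peelingWeight_pos α C2 j).ne']
  simp_rw [hratio]
  have hsq : Tendsto (fun j : ℕ => ((2 : ℝ) ^ j) ^ 2) atTop atTop :=
    (tendsto_pow_atTop two_ne_zero).comp (tendsto_pow_atTop_atTop_of_one_lt one_lt_two)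
  simpa using ((Real.tendsto_exp_atBot.comp
    (hsq.const_mul_atTop_of_neg (r := -(3 * C2 / 4)) (by linarith))).const_mul (2 ^ (1 + α)))

lemma mul_exp_mul_rpow_eq_peelingWeight {α c0 C1 C2 a δ : ℝ} (hδ : 0 < δ)
    (haδ : a * δ ^ 2 = 1) (j : ℕ) :
    2 ^ (j + 1) * δ * (C1 * Real.exp (-C2 * a * (2 ^ j * δ / 2) ^ 2))
        * (c0 * (2 ^ (j + 1) * δ) ^ α)
      = c0 * C1 * δ ^ (1 + α) * peelingWeight α C2 j := by
  have hexp : -C2 * a * (2 ^ j * δ / 2) ^ 2 = -C2 * (2 ^ j / 2) ^ 2 := by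
    linear_combination (-C2 * (2 ^ j / 2) ^ 2) * haδ
  have h2 : (0 : ℝ) < 2 ^ (j + 1) := by positivity
  rw [hexp, peelingWeight, Real.mul_rpow h2.le hδ.le, Real.rpow_add hδ, Real.rpow_add h2,
    Real.rpow_one, Real.rpow_one]
  ring

lemma ENNReal.le_ofReal_of_toReal_le {x : ℝ≥0∞} {r : ℝ} (hx : x ≠ ∞)
    (h : x.toReal ≤ r) : x ≤ ENNReal.ofReal r :=
  (ENNReal.ofReal_toReal hx).symm.trans_le (ENNReal.ofReal_le_ofReal h)

lemma ofReal_mul_measure_le_of_tail {Ω : Type*} [MeasurableSpace Ω] {P : Measure Ω}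
    [IsFiniteMeasure P] {D : Ω → ℝ} {z t ε : ℝ} (hz : 0 ≤ z) (htz : t ≤ z / 2)
    (hD : (P {ω | t ≤ D ω}).toReal ≤ ε) :
    ENNReal.ofReal z * P {ω | z ≤ 2 * D ω} ≤ ENNReal.ofReal (z * ε) := by
  rw [ENNReal.ofReal_mul hz]
  gcongr
  calc P {ω | z ≤ 2 * D ω} ≤ P {ω | t ≤ D ω} :=
        measure_mono fun ω (hω : z ≤ 2 * D ω) => show t ≤ D ω by linarith
    _ ≤ _ := ENNReal.le_ofReal_of_toReal_le (measure_ne_top P _) hD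

section Peeling

variable {X : Type*} [MeasurableSpace X] {μ : Measure X}

lemma ofReal_integral_le_lintegral_ofReal {f : X → ℝ} (hf : 0 ≤ᵐ[μ] f) :
    ENNReal.ofReal (∫ x, f x ∂μ) ≤ ∫⁻ x, ENNReal.ofReal (f x) ∂μ := by
  by_cases hfi : Integrable f μ
  · exact (ofReal_integral_eq_lintegral_ofReal hfi hf).le
  · simp [integral_undef hfi]

lemma ofReal_integral_setIntegral_le_lintegral_mul_measure {Ω : Type*} [MeasurableSpace Ω]
    {P : Measure Ω} [SFinite P] [SFinite μ] {f : X → ℝ} (hf : Measurable f)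
    (hf0 : ∀ x, 0 ≤ f x) {S : Set (Ω × X)} (hS : MeasurableSet S) :
    ENNReal.ofReal (∫ ω, (∫ x in {x | (ω, x) ∈ S}, f x ∂μ) ∂P)
      ≤ ∫⁻ x, ENNReal.ofReal (f x) * P {ω | (ω, x) ∈ S} ∂μ := by
  have hinner (ω : Ω) : ENNReal.ofReal (∫ x in {x | (ω, x) ∈ S}, f x ∂μ)
      ≤ ∫⁻ x, S.indicator (fun p => ENNReal.ofReal (f p.2)) (ω, x) ∂μ :=
    (ofReal_integral_le_lintegral_ofReal (ae_of_all _ fun x => hf0 x)).trans_eq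
      (lintegral_indicator (measurable_prodMk_left hS) _).symm
  have hF : Measurable (S.indicator fun p : Ω × X => ENNReal.ofReal (f p.2)) :=
    (ENNReal.measurable_ofReal.comp (hf.comp measurable_snd)).indicator hS
  calc ENNReal.ofReal (∫ ω, (∫ x in {x | (ω, x) ∈ S}, f x ∂μ) ∂P)
      ≤ ∫⁻ ω, ENNReal.ofReal (∫ x in {x | (ω, x) ∈ S}, f x ∂μ) ∂P :=
        ofReal_integral_le_lintegral_ofReal
          (ae_of_all _ fun ω => setIntegral_nonneg_of_ae (ae_of_all _ fun x => hf0 x))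
    _ ≤ ∫⁻ ω, ∫⁻ x, S.indicator (fun p => ENNReal.ofReal (f p.2)) (ω, x) ∂μ ∂P :=
        lintegral_mono hinner
    _ = ∫⁻ x, ∫⁻ ω,
          {ω | (ω, x) ∈ S}.indicator (fun _ => ENNReal.ofReal (f x)) ω ∂P ∂μ :=
        lintegral_lintegral_swap hF.aemeasurable
    _ = ∫⁻ x, ENNReal.ofReal (f x) * P {ω | (ω, x) ∈ S} ∂μ :=
        lintegral_congr fun x => lintegral_indicator_const (measurable_prodMk_right hS) _

variable {Z : X → ℝ} {g : X → ℝ≥0∞}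

lemma setLIntegral_le_mul_measure {s : Set X} {c : ℝ≥0∞}
    (h : ∀ᵐ x ∂μ, x ∈ s → g x ≤ c) : ∫⁻ x in s, g x ∂μ ≤ c * μ s :=
  (setLIntegral_mono_ae aemeasurable_const h).trans_eq (setLIntegral_const s c)

lemma lintegral_le_dyadic_peeling {δ : ℝ} (hδ : 0 < δ) {b : ℝ≥0∞}
    {c : ℕ → ℝ≥0∞} (h_nonpos : ∀ x, Z x ≤ 0 → g x = 0)
    (h_base : ∀ᵐ x ∂μ, Z x ∈ Ioc 0 δ → g x ≤ b)
    (h_shell : ∀ j, ∀ᵐ x ∂μ, Z x ∈ Ioc (2 ^ j * δ) (2 ^ (j + 1) * δ) → g x ≤ c j) :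
    ∫⁻ x, g x ∂μ
      ≤ b * μ (Z ⁻¹' Ioc 0 δ)
        + ∑' j, c j * μ (Z ⁻¹' Ioc (2 ^ j * δ) (2 ^ (j + 1) * δ)) := by
  have hsupp : Function.support g
      ⊆ Z ⁻¹' Ioc 0 δ ∪ ⋃ j, Z ⁻¹' Ioc (2 ^ j * δ) (2 ^ (j + 1) * δ) := by
    intro x hx
    have hpos : 0 < Z x := not_le.1 fun h => hx (h_nonpos x h)
    rcases le_or_gt (Z x) δ with h | h
    · exact Or.inl ⟨hpos, h⟩
    · exact Or.inr (mem_iUnion.2 (exists_mem_Ioc_two_pow_mul hδ h))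
  calc ∫⁻ x, g x ∂μ
      = ∫⁻ x in Z ⁻¹' Ioc 0 δ ∪ ⋃ j, Z ⁻¹' Ioc (2 ^ j * δ) (2 ^ (j + 1) * δ),
          g x ∂μ :=
        (setLIntegral_eq_of_support_subset hsupp).symm
    _ ≤ ∫⁻ x in Z ⁻¹' Ioc 0 δ, g x ∂μ
          + ∑' j, ∫⁻ x in Z ⁻¹' Ioc (2 ^ j * δ) (2 ^ (j + 1) * δ), g x ∂μ :=
        (lintegral_union_le _ _ _).trans (add_le_add_right (lintegral_iUnion_le _ _) _)
    _ ≤ _ := by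
        gcongr with j
        · exact setLIntegral_le_mul_measure h_base
        · exact setLIntegral_le_mul_measure (h_shell j)

lemma lintegral_le_of_margin {α c0 δ b : ℝ} {c : ℕ → ℝ} (hδ : 0 < δ) (hb : 0 ≤ b)
    (hc : ∀ j, 0 ≤ c j)
    (hmargin : ∀ s > 0, μ (Z ⁻¹' Ioc 0 s) ≤ ENNReal.ofReal (c0 * s ^ α))
    (h_nonpos : ∀ x, Z x ≤ 0 → g x = 0)
    (h_base : ∀ᵐ x ∂μ, Z x ∈ Ioc 0 δ → g x ≤ ENNReal.ofReal b)
    (h_shell : ∀ j, ∀ᵐ x ∂μ, Z x ∈ Ioc (2 ^ j * δ) (2 ^ (j + 1) * δ) →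
      g x ≤ ENNReal.ofReal (c j)) :
    ∫⁻ x, g x ∂μ
      ≤ ENNReal.ofReal (b * (c0 * δ ^ α))
        + ∑' j, ENNReal.ofReal (c j * (c0 * (2 ^ (j + 1) * δ) ^ α)) := by
  refine (lintegral_le_dyadic_peeling hδ h_nonpos h_base h_shell).trans ?_
  simp_rw [ENNReal.ofReal_mul hb, ENNReal.ofReal_mul (hc _)]
  gcongr with j
  · exact hmargin δ hδ
  · exact (measure_mono (preimage_mono (Ioc_subset_Ioc_left (by positivity)))).trans
      (hmargin _ (by positivity))

lemma lintegral_le_of_margin_of_tail {α c0 C1 C2 a δ : ℝ} (hc0 : 0 ≤ c0) (hC1 : 0 ≤ C1)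
    (hC2 : 0 < C2) (hδ : 0 < δ) (haδ : a * δ ^ 2 = 1)
    (hmargin : ∀ s > 0, μ (Z ⁻¹' Ioc 0 s) ≤ ENNReal.ofReal (c0 * s ^ α))
    (hg_le : ∀ x, g x ≤ ENNReal.ofReal (Z x))
    (h_tail : ∀ t > 0, ∀ᵐ x ∂μ, t ≤ Z x / 2 →
      g x ≤ ENNReal.ofReal (Z x * (C1 * Real.exp (-C2 * a * t ^ 2)))) :
    ∫⁻ x, g x ∂μ
      ≤ ENNReal.ofReal (c0 * (1 + C1 * ∑' j, peelingWeight α C2 j) * δ ^ (1 + α)) := by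
  have h_nonpos (x : X) (hx : Z x ≤ 0) : g x = 0 :=
    le_antisymm ((hg_le x).trans_eq (ENNReal.ofReal_of_nonpos hx)) zero_le
  have h_base : ∀ᵐ x ∂μ, Z x ∈ Ioc 0 δ → g x ≤ ENNReal.ofReal δ :=
    ae_of_all _ fun x hx => (hg_le x).trans (ENNReal.ofReal_le_ofReal hx.2)
  have h_shell (j : ℕ) : ∀ᵐ x ∂μ, Z x ∈ Ioc (2 ^ j * δ) (2 ^ (j + 1) * δ) →
      g x ≤ ENNReal.ofReal
        (2 ^ (j + 1) * δ * (C1 * Real.exp (-C2 * a * (2 ^ j * δ / 2) ^ 2))) := by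
    filter_upwards [h_tail (2 ^ j * δ / 2) (by positivity)] with x hx hZx
    exact (hx (by linarith [hZx.1])).trans
      (ENNReal.ofReal_le_ofReal (mul_le_mul_of_nonneg_right hZx.2 (by positivity)))
  have hbase_term : δ * (c0 * δ ^ α) = c0 * δ ^ (1 + α) := by
    rw [Real.rpow_add hδ, Real.rpow_one]
    ring
  have hw (j : ℕ) : 0 ≤ c0 * C1 * δ ^ (1 + α) * peelingWeight α C2 j := by
    have := peelingWeight_pos α C2 j
    positivity
  calc ∫⁻ x, g x ∂μ
      ≤ ENNReal.ofReal (δ * (c0 * δ ^ α))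
          + ∑' j, ENNReal.ofReal
            (2 ^ (j + 1) * δ * (C1 * Real.exp (-C2 * a * (2 ^ j * δ / 2) ^ 2))
              * (c0 * (2 ^ (j + 1) * δ) ^ α)) :=
        lintegral_le_of_margin hδ hδ.le (fun j => by positivity) hmargin h_nonpos h_base h_shell
    _ = _ := by
        simp_rw [hbase_term, mul_exp_mul_rpow_eq_peelingWeight hδ haδ]
        rw [← ENNReal.ofReal_tsum_of_nonneg hw ((summable_peelingWeight α hC2).mul_left _),
          ← ENNReal.ofReal_add (by positivity) (tsum_nonneg hw), tsum_mul_left]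
        ring_nf

end Peeling

theorem statement11_general (α c0 C1 C2 : ℝ) (hc0 : 0 < c0)
    (hC1 : 0 < C1) (hC2 : 0 < C2) :
    ∃ C' > (0 : ℝ), ∀ (d : ℕ) (μ : Measure (EuclideanSpace ℝ (Fin d)))
      (_ : IsProbabilityMeasure μ)
      (Ω : Type) (_ : MeasurableSpace Ω) (Pn : Measure Ω)
      (_ : IsProbabilityMeasure Pn)
      (η : EuclideanSpace ℝ (Fin d) → ℝ)
      (ηhat : Ω → EuclideanSpace ℝ (Fin d) → ℝ) (θstar a : ℝ),
      0 < a →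
      Measurable η → (∀ x, η x ∈ Icc (0 : ℝ) 1) →
      0 < ∫ x, η x ∂μ →
      Measurable (fun z : Ω × EuclideanSpace ℝ (Fin d) => ηhat z.1 z.2) →
      (∀ ω x, ηhat ω x ∈ Icc (0 : ℝ) 1) →
      θstar ∈ Icc (0 : ℝ) 1 →
      θstar * ∫ x, η x ∂μ = ∫ x, max (η x - θstar) 0 ∂μ →
      (∀ δ > (0 : ℝ),
        (μ {x | 0 < |η x - θstar| ∧ |η x - θstar| ≤ δ}).toReal ≤ c0 * δ ^ α) →
      (∀ t > (0 : ℝ), ∀ᵐ x ∂μ,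
        (Pn {ω | t ≤ |ηhat ω x - η x|}).toReal ≤ C1 * Real.exp (-C2 * a * t ^ 2)) →
      ∫ ω, (∫ x in {x | |η x - θstar| ≤ 2 * |ηhat ω x - η x|},
          |η x - θstar| ∂μ) ∂Pn ≤ C' * a ^ (-(1 + α) / 2) := by
  have hseries : 0 ≤ ∑' j, peelingWeight α C2 j :=
    tsum_nonneg fun j => (peelingWeight_pos α C2 j).le
  refine ⟨c0 * (1 + C1 * ∑' j, peelingWeight α C2 j), by positivity, ?_⟩
  intro d μ _ Ω _ Pn _ η ηhat θstar a ha hη _ _ hηhat _ _ _ hmargin hconc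
  set Z : EuclideanSpace ℝ (Fin d) → ℝ := fun x => |η x - θstar|
  set S : Set (Ω × EuclideanSpace ℝ (Fin d)) := {p | Z p.2 ≤ 2 * |ηhat p.1 p.2 - η p.2|}
  have hZ : Measurable Z := (hη.sub measurable_const).abs
  have hS : MeasurableSet S := measurableSet_le (hZ.comp measurable_snd)
    (measurable_const.mul (hηhat.sub (hη.comp measurable_snd)).abs)
  have hmargin' (s : ℝ) (hs : 0 < s) : μ (Z ⁻¹' Ioc 0 s) ≤ ENNReal.ofReal (c0 * s ^ α) :=
    ENNReal.le_ofReal_of_toReal_le (measure_ne_top μ _) (hmargin s hs)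
  have h_tail (t : ℝ) (ht : 0 < t) : ∀ᵐ x ∂μ, t ≤ Z x / 2 →
      ENNReal.ofReal (Z x) * Pn {ω | (ω, x) ∈ S}
        ≤ ENNReal.ofReal (Z x * (C1 * Real.exp (-C2 * a * t ^ 2))) := by
    filter_upwards [hconc t ht] with x hx htx
    exact ofReal_mul_measure_le_of_tail (abs_nonneg _) htx hx
  obtain ⟨δ, hδ, haδ, hδα⟩ := exists_pos_mul_sq_eq_one_and_rpow_eq ha (1 + α)
  have hbound := lintegral_le_of_margin_of_tail hc0.le hC1.le hC2 hδ haδ hmargin'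
    (fun x => mul_le_of_le_one_right' prob_le_one) h_tail
  rw [hδα] at hbound
  rw [← ENNReal.ofReal_le_ofReal_iff (by positivity)]
  exact (ofReal_integral_setIntegral_le_lintegral_mul_measure hZ (fun x => abs_nonneg _) hS).trans
    hbound

theorem statement11 (α c0 C1 C2 : ℝ) (hα : 0 < α) (hc0 : 0 < c0)
    (hC1 : 0 < C1) (hC2 : 0 < C2) :
    ∃ C' > (0 : ℝ), ∀ (d : ℕ) (μ : Measure (EuclideanSpace ℝ (Fin d)))
      (_ : IsProbabilityMeasure μ)
      (Ω : Type) (_ : MeasurableSpace Ω) (Pn : Measure Ω)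
      (_ : IsProbabilityMeasure Pn)
      (η : EuclideanSpace ℝ (Fin d) → ℝ)
      (ηhat : Ω → EuclideanSpace ℝ (Fin d) → ℝ) (θstar a : ℝ),
      0 < a →
      Measurable η → (∀ x, η x ∈ Icc (0 : ℝ) 1) →
      0 < ∫ x, η x ∂μ →
      Measurable (fun z : Ω × EuclideanSpace ℝ (Fin d) => ηhat z.1 z.2) →
      (∀ ω x, ηhat ω x ∈ Icc (0 : ℝ) 1) →
      θstar ∈ Icc (0 : ℝ) 1 →
      θstar * ∫ x, η x ∂μ = ∫ x, max (η x - θstar) 0 ∂μ →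
      (∀ δ > (0 : ℝ),
        (μ {x | 0 < |η x - θstar| ∧ |η x - θstar| ≤ δ}).toReal ≤ c0 * δ ^ α) →
      (∀ t > (0 : ℝ), ∀ᵐ x ∂μ,
        (Pn {ω | t ≤ |ηhat ω x - η x|}).toReal ≤ C1 * Real.exp (-C2 * a * t ^ 2)) →
      ∫ ω, (∫ x in {x | |η x - θstar| ≤ 2 * |ηhat ω x - η x|},
          |η x - θstar| ∂μ) ∂Pn ≤ C' * a ^ (-(1 + α) / 2) :=
  statement11_general α c0 C1 C2 hc0 hC1 hC2
end

section
/- (Theorem 2, threshold estimation rate.) Suppose P(Y=1) ≥ p > 0, the distribution P satisfies the α-margin assumption with constants C0 > 0, δ0 ∈ (0, 1/12], α > 0, and there exists an estimator η̂ based on D_n satisfying the exponential concentration assumption: for all t > 0, P^{⊗n}(|η̂(x) − η(x)| ≥ t) ≤ C1 exp(−C2 a_n t²) for P_X-almost every x. Let θ̂ ∈ [0,1] be the solution of θ · (1/N) Σ_{X_i ∈ D_N} η̂(X_i) = (1/N) Σ_{X_i ∈ D_N} (η̂(X_i) − θ)_+. Then there exists a constant C > 0 depending only on C0, C1, C2,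 p such that E_{(D_n, D_N)} |θ* − θ̂| ≤ C ( a_n^{−1/2} + N^{−1/2} ). -/
/-!
The map `G θ = θ E[η] - E[(η - θ)₊]` vanishes at `θ*` and increases with slope at least
`E[η] ≥ p`, so `p |θ* - θ̂| ≤ |G θ̂|`. Subtracting the empirical equation that defines `θ̂` splits
`G θ̂` into three errors: the deviation of the sample mean of `η`; twice the sample mean of
`|η̂ - η|`, since `t ↦ (t - θ)₊` is `1`-Lipschitz; and, through the layer-cake formula
`E[(η - θ)₊] = ∫_θ^1 P(η > s) ds`, the `L¹` distance on `(0, 1]` between the true and the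
empirical survival functions of `η`, which no longer depends on the random `θ̂`. Both sampling
errors are `O(N^{-1/2})` in expectation by Popoviciu's variance bound, and the expected estimation
error is at most `∫_0^∞ C1 exp(-C2 a t²) dt = O(a^{-1/2})` by the tail-integral formula.
-/

open MeasureTheory ProbabilityTheory Set

lemma MeasureTheory.Integrable.of_forall_mem_Icc {α : Type*} [MeasurableSpace α] {μ : Measure α}
    [IsFiniteMeasure μ] {f : α → ℝ} (hf : AEStronglyMeasurable f μ)
    (h01 : ∀ a, f a ∈ Icc (0 : ℝ) 1) : Integrable f μ :=
  .of_bound hf 1 (ae_of_all _ fun a => by rw [Real.norm_of_nonneg (h01 a).1]; exact (h01 a).2)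

lemma abs_sub_mem_Icc {a b : ℝ} (ha : a ∈ Icc (0 : ℝ) 1) (hb : b ∈ Icc (0 : ℝ) 1) :
    |a - b| ∈ Icc (0 : ℝ) 1 :=
  ⟨abs_nonneg _, abs_sub_le_of_nonneg_of_le ha.1 ha.2 hb.1 hb.2⟩

lemma integral_mem_Icc_of_forall_mem_Icc {α : Type*} [MeasurableSpace α] {μ : Measure α}
    [IsProbabilityMeasure μ] {f : α → ℝ} (h01 : ∀ a, f a ∈ Icc (0 : ℝ) 1) :
    ∫ a, f a ∂μ ∈ Icc (0 : ℝ) 1 :=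
  ⟨integral_nonneg fun a => (h01 a).1, (integral_mono_of_nonneg (ae_of_all _ fun a => (h01 a).1)
    (integrable_const 1) (ae_of_all _ fun a => (h01 a).2)).trans_eq (by simp)⟩

-- The empty sample has mean `0`, since `1 / 0 = 0` in `ℝ`.
noncomputable def empiricalMean {N : ℕ} (f : Fin N → ℝ) : ℝ := 1 / (N : ℝ) * ∑ i, f i

section EmpiricalMean

variable {N : ℕ}

lemma empiricalMean_mono {f g : Fin N → ℝ} (hfg : ∀ i, f i ≤ g i) :
    empiricalMean f ≤ empiricalMean g :=
  mul_le_mul_of_nonneg_left (Finset.sum_le_sum fun i _ => hfg i) (by positivity)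

lemma empiricalMean_const (hN : 0 < N) (c : ℝ) : empiricalMean (fun _ : Fin N => c) = c := by
  rw [empiricalMean, Finset.sum_const, Finset.card_univ, Fintype.card_fin, nsmul_eq_mul,
    ← mul_assoc, one_div_mul_cancel (by positivity), one_mul]

lemma empiricalMean_mem_Icc {f : Fin N → ℝ} (hf : ∀ i, f i ∈ Icc (0 : ℝ) 1) :
    empiricalMean f ∈ Icc (0 : ℝ) 1 := by
  rcases N.eq_zero_or_pos with rfl | hN
  · simp [empiricalMean]
  · exact ⟨(empiricalMean_const hN 0).symm.le.trans (empiricalMean_mono fun i => (hf i).1),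
      (empiricalMean_mono fun i => (hf i).2).trans (empiricalMean_const hN 1).le⟩

lemma abs_empiricalMean_sub_le (f g : Fin N → ℝ) :
    |empiricalMean f - empiricalMean g| ≤ empiricalMean fun i => |f i - g i| := by
  rw [empiricalMean, empiricalMean, empiricalMean, ← mul_sub, ← Finset.sum_sub_distrib, abs_mul,
    abs_of_nonneg (by positivity)]
  exact mul_le_mul_of_nonneg_left (Finset.abs_sum_le_sum_abs _ _) (by positivity)

lemma measurable_empiricalMean {α : Type*} [MeasurableSpace α] {X : Fin N → α → ℝ}
    (hX : ∀ i, Measurable (X i)) : Measurable fun a => empiricalMean fun i => X i a :=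
  measurable_const.mul (Finset.measurable_sum _ fun i _ => hX i)

lemma MeasureTheory.Integrable.empiricalMean {α : Type*} [MeasurableSpace α] {ν : Measure α}
    {X : Fin N → α → ℝ} (hX : ∀ i, Integrable (X i) ν) :
    Integrable (fun a => empiricalMean fun i => X i a) ν :=
  (integrable_finsetSum _ fun i _ => hX i).const_mul _

lemma integral_empiricalMean {α : Type*} [MeasurableSpace α] {ν : Measure α}
    {X : Fin N → α → ℝ} (hX : ∀ i, Integrable (X i) ν) :
    ∫ a, (empiricalMean fun i => X i a) ∂ν = empiricalMean fun i => ∫ a, X i a ∂ν := by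
  simp only [empiricalMean]
  rw [integral_const_mul, integral_finsetSum _ fun i _ => hX i]

end EmpiricalMean

section LayerCake

variable {W : Type*} [MeasurableSpace W]

lemma indicator_Ioi_apply_eq (s y : ℝ) :
    (Ioi s).indicator (1 : ℝ → ℝ) y = (Iio y).indicator 1 s := by
  simp only [indicator_apply, mem_Ioi, mem_Iio, Pi.one_apply]

lemma indicator_Ioi_mem_Icc (s y : ℝ) : (Ioi s).indicator (1 : ℝ → ℝ) y ∈ Icc (0 : ℝ) 1 := by
  simp only [indicator_apply]
  split_ifs <;> simp

lemma measurable_indicator_Ioi_comp {Z : W → ℝ} (hZ : Measurable Z) :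
    Measurable fun q : ℝ × W => (Ioi q.1).indicator (1 : ℝ → ℝ) (Z q.2) := by
  simp only [indicator_apply, mem_Ioi, Pi.one_apply]
  exact Measurable.ite (measurableSet_lt measurable_fst (hZ.comp measurable_snd))
    measurable_const measurable_const

lemma max_sub_eq_setIntegral_indicator {y : ℝ} (hy : y ≤ 1) (θ : ℝ) :
    max (y - θ) 0 = ∫ s in Ioc θ 1, (Ioi s).indicator (1 : ℝ → ℝ) y := by
  simp_rw [indicator_Ioi_apply_eq _ y]
  rw [integral_indicator_one measurableSet_Iio, measureReal_restrict_apply measurableSet_Iio,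
    show Iio y ∩ Ioc θ 1 = Ioo θ y by
      ext s; simp only [mem_inter_iff, mem_Iio, mem_Ioc, mem_Ioo]; grind,
    Real.volume_real_Ioo]

lemma integrableOn_indicator_Ioi_apply (y a b : ℝ) :
    IntegrableOn (fun s => (Ioi s).indicator (1 : ℝ → ℝ) y) (Ioc a b) := by
  simp_rw [indicator_Ioi_apply_eq _ y]
  exact (integrableOn_const (by simp)).indicator measurableSet_Iio

lemma integrable_indicator_Ioi_comp (ρ : Measure W) [IsFiniteMeasure ρ] {Z : W → ℝ}
    (hZ : Measurable Z) (a b : ℝ) :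
    Integrable (Function.uncurry fun s w => (Ioi s).indicator (1 : ℝ → ℝ) (Z w))
      ((volume.restrict (Ioc a b)).prod ρ) :=
  have : IsFiniteMeasure (volume.restrict (Ioc a b)) := isFiniteMeasure_restrict.mpr (by simp)
  .of_forall_mem_Icc (measurable_indicator_Ioi_comp hZ).aestronglyMeasurable
    fun q => indicator_Ioi_mem_Icc q.1 (Z q.2)

lemma integral_max_sub_eq_setIntegral (ρ : Measure W) [IsFiniteMeasure ρ] {Z : W → ℝ}
    (hZ : Measurable Z) (hZ1 : ∀ w, Z w ≤ 1) (θ : ℝ) :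
    ∫ w, max (Z w - θ) 0 ∂ρ = ∫ s in Ioc θ 1, ∫ w, (Ioi s).indicator (1 : ℝ → ℝ) (Z w) ∂ρ := by
  simp_rw [max_sub_eq_setIntegral_indicator (hZ1 _) θ]
  exact (integral_integral_swap (integrable_indicator_Ioi_comp ρ hZ θ 1)).symm

lemma empiricalMean_max_sub_eq_setIntegral {N : ℕ} {e : Fin N → ℝ} (he1 : ∀ i, e i ≤ 1)
    (θ : ℝ) :
    empiricalMean (fun i => max (e i - θ) 0)
      = ∫ s in Ioc θ 1, empiricalMean fun i => (Ioi s).indicator (1 : ℝ → ℝ) (e i) := by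
  simp_rw [max_sub_eq_setIntegral_indicator (he1 _) θ]
  exact (integral_empiricalMean fun i => integrableOn_indicator_Ioi_apply (e i) θ 1).symm

lemma abs_setIntegral_sub_setIntegral_le {f g : ℝ → ℝ} (hf : IntegrableOn f (Ioc 0 1))
    (hg : IntegrableOn g (Ioc 0 1)) {θ : ℝ} (hθ : 0 ≤ θ) :
    |(∫ s in Ioc θ 1, f s) - ∫ s in Ioc θ 1, g s| ≤ ∫ s in Ioc 0 1, |f s - g s| := by
  have hsub : Ioc θ 1 ⊆ Ioc 0 1 := Ioc_subset_Ioc_left hθ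
  rw [← integral_sub (hf.mono_set hsub) (hg.mono_set hsub)]
  exact abs_integral_le_integral_abs.trans
    (setIntegral_mono_set (hf.sub hg).abs (ae_of_all _ fun _ => abs_nonneg _) hsub.eventuallyLE)

end LayerCake

noncomputable def survivalDist {W : Type*} [MeasurableSpace W] (μ : Measure W) (η : W → ℝ)
    {N : ℕ} (e : Fin N → ℝ) : ℝ :=
  ∫ s in Ioc 0 1, |(empiricalMean fun i => (Ioi s).indicator (1 : ℝ → ℝ) (e i)) -
    ∫ x, (Ioi s).indicator (1 : ℝ → ℝ) (η x) ∂μ|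

lemma mul_abs_sub_le_abs_of_slope {f : ℝ → ℝ} {p a b : ℝ}
    (hf : ∀ u v, u ≤ v → p * (v - u) ≤ f v - f u) (ha : f a = 0) : p * |a - b| ≤ |f b| := by
  rcases le_total a b with hab | hab
  · have := hf a b hab
    rw [abs_sub_comm, abs_of_nonneg (sub_nonneg.2 hab)]
    linarith [le_abs_self (f b)]
  · have := hf b a hab
    rw [abs_of_nonneg (sub_nonneg.2 hab)]
    linarith [neg_abs_le (f b)]

theorem mul_abs_sub_threshold_le {W : Type*} [MeasurableSpace W] (μ : Measure W)
    [IsFiniteMeasure μ] {η : W → ℝ} (hη : Measurable η) (hη01 : ∀ x, η x ∈ Icc (0 : ℝ) 1)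
    {p θstar θ : ℝ} (hpI : p ≤ ∫ x, η x ∂μ)
    (hθstar : θstar * ∫ x, η x ∂μ = ∫ x, max (η x - θstar) 0 ∂μ) (hθ : θ ∈ Icc (0 : ℝ) 1)
    {N : ℕ} (e h : Fin N → ℝ) (he1 : ∀ i, e i ≤ 1)
    (heq : θ * empiricalMean h = empiricalMean fun i => max (h i - θ) 0) :
    p * |θstar - θ| ≤ |empiricalMean e - ∫ x, η x ∂μ| +
      2 * empiricalMean (fun i => |h i - e i|) + survivalDist μ η e := by
  set I := ∫ x, η x ∂μ
  set φ : ℝ → ℝ := fun θ => ∫ x, max (η x - θ) 0 ∂μ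
  have hηi : Integrable η μ := .of_forall_mem_Icc hη.aestronglyMeasurable hη01
  have hslope : ∀ u v, u ≤ v → p * (v - u) ≤ (v * I - φ v) - (u * I - φ u) := by
    intro u v huv
    have hφ : φ v ≤ φ u := integral_mono (hηi.sub (integrable_const v)).pos_part
      (hηi.sub (integrable_const u)).pos_part fun x => by simp only; gcongr
    nlinarith
  have hmean : |I - empiricalMean h| ≤
      |empiricalMean e - I| + empiricalMean fun i => |h i - e i| := by
    linarith [abs_sub_le I (empiricalMean e) (empiricalMean h), abs_sub_comm I (empiricalMean e),
      abs_sub_comm (empiricalMean e) (empiricalMean h), abs_empiricalMean_sub_le h e]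
  have hlip : |(empiricalMean fun i => max (h i - θ) 0) - empiricalMean fun i => max (e i - θ) 0|
      ≤ empiricalMean fun i => |h i - e i| :=
    (abs_empiricalMean_sub_le _ _).trans (empiricalMean_mono fun i => by
      simpa using abs_max_sub_max_le_abs (h i - θ) (e i - θ) 0)
  have htail : |(empiricalMean fun i => max (e i - θ) 0) - φ θ| ≤ survivalDist μ η e := by
    rw [empiricalMean_max_sub_eq_setIntegral he1]
    simp only [φ, integral_max_sub_eq_setIntegral μ hη (fun x => (hη01 x).2)]
    exact abs_setIntegral_sub_setIntegral_le
      (Integrable.empiricalMean fun i => integrableOn_indicator_Ioi_apply (e i) 0 1)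
      (integrable_indicator_Ioi_comp μ hη 0 1).integral_prod_left hθ.1
  have hθI : |θ * (I - empiricalMean h)| ≤ |I - empiricalMean h| := by
    rw [abs_mul]
    exact mul_le_of_le_one_left (abs_nonneg _) (abs_le.2 ⟨by linarith [hθ.1], hθ.2⟩)
  calc p * |θstar - θ| ≤ |θ * I - φ θ| :=
        mul_abs_sub_le_abs_of_slope (f := fun θ => θ * I - φ θ) hslope (by simp [φ, hθstar])
    _ = |θ * (I - empiricalMean h) + ((empiricalMean fun i => max (h i - θ) 0) -
          empiricalMean fun i => max (e i - θ) 0) +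
          ((empiricalMean fun i => max (e i - θ) 0) - φ θ)| := by
        congr 1; linear_combination heq
    _ ≤ _ := by
        linarith [abs_add_three (θ * (I - empiricalMean h))
          ((empiricalMean fun i => max (h i - θ) 0) - empiricalMean fun i => max (e i - θ) 0)
          ((empiricalMean fun i => max (e i - θ) 0) - φ θ)]

lemma integral_abs_sub_integral_le_sqrt_variance {Ω : Type*} [MeasurableSpace Ω] {μ : Measure Ω}
    [IsProbabilityMeasure μ] {X : Ω → ℝ} (hX : MemLp X 2 μ) :
    ∫ ω, |X ω - μ[X]| ∂μ ≤ √(Var[X; μ]) := by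
  have hY : MemLp (fun ω => |X ω - μ[X]|) 2 μ := (hX.sub (memLp_const _)).abs
  have h := variance_nonneg (fun ω => |X ω - μ[X]|) μ
  rw [variance_eq_sub hY] at h
  rw [Real.le_sqrt (integral_nonneg fun _ => abs_nonneg _) (variance_nonneg _ _),
    variance_eq_integral hX.aemeasurable]
  simpa [sq_abs] using h

section SampleMean

variable {W : Type*} [MeasurableSpace W] (μ : Measure W) [IsProbabilityMeasure μ] {N : ℕ}

lemma integral_empiricalMean_comp_eval (hN : 0 < N) {g : W → ℝ} (hg : Integrable g μ) :
    ∫ y, (empiricalMean fun i => g (y i)) ∂(Measure.pi fun _ : Fin N => μ) = ∫ x, g x ∂μ := by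
  rw [integral_empiricalMean fun i => integrable_comp_eval hg]
  rw [show (fun i => ∫ y, g (y i) ∂Measure.pi fun _ : Fin N => μ) = fun _ => ∫ x, g x ∂μ from
    funext fun i => integral_comp_eval hg.aestronglyMeasurable]
  exact empiricalMean_const hN _

lemma variance_empiricalMean_comp_eval_le {g : W → ℝ} (hg : Measurable g)
    (hg01 : ∀ x, g x ∈ Icc (0 : ℝ) 1) :
    Var[fun y : Fin N → W => empiricalMean fun i => g (y i); Measure.pi fun _ : Fin N => μ] ≤
      1 / (4 * N) := by
  have hgL2 : MemLp g 2 μ := memLp_of_bounded (ae_of_all _ hg01) hg.aestronglyMeasurable 2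
  have hmean : (fun y : Fin N → W => empiricalMean fun i => g (y i))
      = fun y => 1 / (N : ℝ) * (∑ i, fun ω : Fin N → W => g (ω i)) y := by
    ext y; simp [empiricalMean]
  have hvar : Var[g; μ] ≤ 1 / 4 := by
    have := variance_le_sq_of_bounded (ae_of_all μ hg01) hg.aemeasurable
    norm_num at this
    linarith
  rw [hmean, variance_const_mul, variance_sum_pi fun _ => hgL2]
  simp only [Finset.sum_const, Finset.card_univ, Fintype.card_fin, nsmul_eq_mul]
  rcases N.eq_zero_or_pos with rfl | hN
  · simp
  · calc (1 / (N : ℝ)) ^ 2 * (N * Var[g; μ]) = Var[g; μ] / N := by field_simp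
      _ ≤ 1 / 4 / N := by gcongr
      _ = 1 / (4 * N) := by ring

lemma integral_abs_empiricalMean_sub_le (hN : 0 < N) {g : W → ℝ} (hg : Measurable g)
    (hg01 : ∀ x, g x ∈ Icc (0 : ℝ) 1) :
    ∫ y, |(empiricalMean fun i => g (y i)) - ∫ x, g x ∂μ| ∂(Measure.pi fun _ : Fin N => μ)
      ≤ 1 / (2 * √N) := by
  have hgL2 : MemLp g 2 μ := memLp_of_bounded (ae_of_all _ hg01) hg.aestronglyMeasurable 2
  have hSL2 : MemLp (fun y : Fin N → W => empiricalMean fun i => g (y i)) 2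
      (Measure.pi fun _ : Fin N => μ) :=
    memLp_of_bounded (ae_of_all _ fun y : Fin N → W => empiricalMean_mem_Icc fun i => hg01 (y i))
      (measurable_empiricalMean fun i => hg.comp (measurable_pi_apply i)).aestronglyMeasurable 2
  calc _ ≤ √(Var[fun y : Fin N → W => empiricalMean fun i => g (y i);
        Measure.pi fun _ : Fin N => μ]) := by
        rw [← integral_empiricalMean_comp_eval μ hN (hgL2.integrable one_le_two)]
        exact integral_abs_sub_integral_le_sqrt_variance hSL2
    _ ≤ √(1 / (4 * N)) := Real.sqrt_le_sqrt (variance_empiricalMean_comp_eval_le μ hg hg01)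
    _ = 1 / (2 * √N) := by
        rw [Real.sqrt_div' _ (by positivity), Real.sqrt_mul' _ (by positivity)]; norm_num

end SampleMean

section SurvivalDist

variable {W : Type*} [MeasurableSpace W] (μ : Measure W) [IsProbabilityMeasure μ] {N : ℕ}
  {η : W → ℝ}

lemma integrable_abs_empiricalMean_indicator_sub (hη : Measurable η) :
    Integrable (Function.uncurry fun s (y : Fin N → W) =>
      |(empiricalMean fun i => (Ioi s).indicator (1 : ℝ → ℝ) (η (y i))) -
        ∫ x, (Ioi s).indicator (1 : ℝ → ℝ) (η x) ∂μ|)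
      ((volume.restrict (Ioc 0 1)).prod (Measure.pi fun _ : Fin N => μ)) := by
  have : IsFiniteMeasure (volume.restrict (Ioc (0 : ℝ) 1)) :=
    isFiniteMeasure_restrict.mpr (by simp)
  have hF : Measurable fun s => ∫ x, (Ioi s).indicator (1 : ℝ → ℝ) (η x) ∂μ :=
    (measurable_indicator_Ioi_comp hη).stronglyMeasurable.integral_prod_right'.measurable
  refine .of_forall_mem_Icc (((measurable_empiricalMean fun i => measurable_indicator_Ioi_comp
    (hη.comp (measurable_pi_apply i))).sub (hF.comp measurable_fst)).abs.aestronglyMeasurable)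
    fun q => abs_sub_mem_Icc (empiricalMean_mem_Icc fun i => indicator_Ioi_mem_Icc q.1 (η (q.2 i)))
      (integral_mem_Icc_of_forall_mem_Icc fun x => indicator_Ioi_mem_Icc q.1 (η x))

lemma integrable_survivalDist (hη : Measurable η) :
    Integrable (fun y => survivalDist μ η fun i => η (y i)) (Measure.pi fun _ : Fin N => μ) :=
  (integrable_abs_empiricalMean_indicator_sub μ hη).integral_prod_right

lemma integral_survivalDist_le (hη : Measurable η) (hN : 0 < N) :
    ∫ y, (survivalDist μ η fun i => η (y i)) ∂(Measure.pi fun _ : Fin N => μ) ≤ 1 / (2 * √N) := by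
  unfold survivalDist
  rw [← integral_integral_swap (integrable_abs_empiricalMean_indicator_sub μ hη)]
  calc _ ≤ ∫ _ in Ioc (0 : ℝ) 1, 1 / (2 * √N) :=
        integral_mono_of_nonneg (ae_of_all _ fun _ => integral_nonneg fun _ => abs_nonneg _)
          (integrable_const _) (ae_of_all _ fun s => integral_abs_empiricalMean_sub_le μ hN
            ((measurable_const.indicator measurableSet_Ioi).comp hη)
            fun x => indicator_Ioi_mem_Icc s (η x))
    _ = 1 / (2 * √N) := by simp

end SurvivalDist

lemma integral_le_setIntegral_of_tail_le {Ω W : Type*} [MeasurableSpace Ω] [MeasurableSpace W]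
    (Pn : Measure Ω) [IsFiniteMeasure Pn] (μ : Measure W) [IsProbabilityMeasure μ]
    {Z : Ω × W → ℝ} (hZ : Measurable Z) (hZi : Integrable Z (Pn.prod μ)) (hZ0 : ∀ z, 0 ≤ Z z)
    {B : ℝ → ℝ} (hB : IntegrableOn B (Ioi 0))
    (htail : ∀ t > 0, ∀ᵐ x ∂μ, Pn.real {ω | t ≤ Z (ω, x)} ≤ B t) :
    ∫ z, Z z ∂(Pn.prod μ) ≤ ∫ t in Ioi 0, B t := by
  rw [hZi.integral_eq_integral_meas_lt (ae_of_all _ hZ0)]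
  refine integral_mono_of_nonneg (ae_of_all _ fun _ => measureReal_nonneg) hB
    ((ae_restrict_iff' measurableSet_Ioi).2 (ae_of_all _ fun t ht => ?_))
  obtain ⟨x, hx⟩ := (htail t ht).exists
  have hB0 : 0 ≤ B t := measureReal_nonneg.trans hx
  have hlint : ∫⁻ x, Pn {ω | t ≤ Z (ω, x)} ∂μ ≤ ENNReal.ofReal (B t) :=
    (lintegral_mono_ae ((htail t ht).mono fun x hx =>
      (ENNReal.le_ofReal_iff_toReal_le (measure_ne_top _ _) hB0).2 hx)).trans_eq (by simp)
  calc (Pn.prod μ).real {z | t < Z z} ≤ (Pn.prod μ).real {z | t ≤ Z z} :=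
        measureReal_mono fun z (hz : t < Z z) => hz.le
    _ ≤ B t := by
        rw [measureReal_def, Measure.prod_apply_symm (measurableSet_le measurable_const hZ)]
        exact ENNReal.toReal_le_of_le_ofReal hB0 hlint

lemma integral_le_of_gaussian_tail {Ω W : Type*} [MeasurableSpace Ω] [MeasurableSpace W]
    (Pn : Measure Ω) [IsFiniteMeasure Pn] (μ : Measure W) [IsProbabilityMeasure μ]
    {Z : Ω × W → ℝ} (hZ : Measurable Z) (hZ01 : ∀ z, Z z ∈ Icc (0 : ℝ) 1) {C b : ℝ} (hb : 0 < b)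
    (htail : ∀ t > 0, ∀ᵐ x ∂μ, Pn.real {ω | t ≤ Z (ω, x)} ≤ C * Real.exp (-b * t ^ 2)) :
    ∫ z, Z z ∂(Pn.prod μ) ≤ C * (√(Real.pi / b) / 2) := by
  rw [← integral_gaussian_Ioi, ← integral_const_mul]
  exact integral_le_setIntegral_of_tail_le Pn μ hZ (.of_forall_mem_Icc hZ.aestronglyMeasurable hZ01)
    (fun z => (hZ01 z).1) ((integrable_exp_neg_mul_sq hb).const_mul C).integrableOn htail

lemma integral_empiricalMean_comp_prodMap_eval {Ω W : Type*} [MeasurableSpace Ω]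
    [MeasurableSpace W] (Pn : Measure Ω) [SFinite Pn] (μ : Measure W) [IsProbabilityMeasure μ]
    {N : ℕ} (hN : 0 < N) {f : Ω × W → ℝ} (hf : Integrable f (Pn.prod μ)) :
    ∫ z, (empiricalMean fun i => f (z.1, z.2 i)) ∂(Pn.prod (Measure.pi fun _ : Fin N => μ))
      = ∫ q, f q ∂(Pn.prod μ) := by
  have hpres : ∀ i : Fin N, MeasurePreserving (Prod.map id (Function.eval i))
      (Pn.prod (Measure.pi fun _ : Fin N => μ)) (Pn.prod μ) :=
    fun i => (MeasurePreserving.id Pn).prod (measurePreserving_eval _ i)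
  rw [integral_empiricalMean (X := fun i (z : Ω × (Fin N → W)) => f (z.1, z.2 i))
    fun i => (hpres i).integrable_comp_of_integrable hf]
  have hcoord : ∀ i : Fin N, ∫ z, f (z.1, z.2 i) ∂(Pn.prod (Measure.pi fun _ : Fin N => μ))
      = ∫ q, f q ∂(Pn.prod μ) := fun i => by
    rw [← (hpres i).map_eq, integral_map (hpres i).measurable.aemeasurable
      ((hpres i).map_eq ▸ hf.aestronglyMeasurable)]
    rfl
  simp_rw [hcoord]
  exact empiricalMean_const hN _

theorem integral_abs_sub_threshold_le {W Ω : Type*} [MeasurableSpace W] [MeasurableSpace Ω]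
    (μ : Measure W) [IsProbabilityMeasure μ] (Pn : Measure Ω) [IsProbabilityMeasure Pn]
    {η : W → ℝ} {ηhat : Ω → W → ℝ} {N : ℕ} {θhat : Ω × (Fin N → W) → ℝ} {p θstar C b : ℝ}
    (hp : 0 < p) (hb : 0 < b) (hN : 0 < N) (hη : Measurable η) (hη01 : ∀ x, η x ∈ Icc (0 : ℝ) 1)
    (hηhat : Measurable fun z : Ω × W => ηhat z.1 z.2) (hηhat01 : ∀ ω x, ηhat ω x ∈ Icc (0 : ℝ) 1)
    (hpI : p ≤ ∫ x, η x ∂μ) (hθstar : θstar * ∫ x, η x ∂μ = ∫ x, max (η x - θstar) 0 ∂μ)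
    (hconc : ∀ t > (0 : ℝ), ∀ᵐ x ∂μ,
      Pn.real {ω | t ≤ |ηhat ω x - η x|} ≤ C * Real.exp (-b * t ^ 2))
    (hθhat01 : ∀ z, θhat z ∈ Icc (0 : ℝ) 1)
    (hθhat : ∀ z, θhat z * (empiricalMean fun i => ηhat z.1 (z.2 i)) =
      empiricalMean fun i => max (ηhat z.1 (z.2 i) - θhat z) 0) :
    ∫ z, |θstar - θhat z| ∂(Pn.prod (Measure.pi fun _ : Fin N => μ)) ≤
      (1 / √N + C * √(Real.pi / b)) / p := by
  set π := Measure.pi fun _ : Fin N => μ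
  set T₁ : (Fin N → W) → ℝ := fun y => |(empiricalMean fun i => η (y i)) - ∫ x, η x ∂μ|
  set T₂ : Ω × (Fin N → W) → ℝ := fun z => empiricalMean fun i => |ηhat z.1 (z.2 i) - η (z.2 i)|
  set T₃ : (Fin N → W) → ℝ := fun y => survivalDist μ η fun i => η (y i)
  have hkey : ∀ z, |θstar - θhat z| ≤ (T₁ z.2 + 2 * T₂ z + T₃ z.2) / p := fun z => by
    rw [le_div_iff₀ hp, mul_comm]
    exact mul_abs_sub_threshold_le μ hη hη01 hpI hθstar (hθhat01 z) _ _
      (fun i => (hη01 _).2) (hθhat z)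
  have hZ : Measurable fun q : Ω × W => |ηhat q.1 q.2 - η q.2| :=
    (hηhat.sub (hη.comp measurable_snd)).abs
  have hZ01 : ∀ q : Ω × W, |ηhat q.1 q.2 - η q.2| ∈ Icc (0 : ℝ) 1 :=
    fun q => abs_sub_mem_Icc (hηhat01 q.1 q.2) (hη01 q.2)
  have hT₁i : Integrable (fun z => T₁ z.2) (Pn.prod π) :=
    ((Integrable.empiricalMean fun i => integrable_comp_eval
      (.of_forall_mem_Icc hη.aestronglyMeasurable hη01)).sub (integrable_const _)).abs.comp_snd Pn
  have hT₂i : Integrable T₂ (Pn.prod π) :=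
    .of_forall_mem_Icc (measurable_empiricalMean fun i => hZ.comp
      (measurable_fst.prodMk ((measurable_pi_apply i).comp measurable_snd))).aestronglyMeasurable
      fun z => empiricalMean_mem_Icc fun i => hZ01 (z.1, z.2 i)
  have hT₃i : Integrable (fun z => T₃ z.2) (Pn.prod π) := (integrable_survivalDist μ hη).comp_snd Pn
  have hT₁ : ∫ z, T₁ z.2 ∂(Pn.prod π) ≤ 1 / (2 * √N) := by
    simpa [integral_fun_snd] using integral_abs_empiricalMean_sub_le μ hN hη hη01
  have hT₂ : ∫ z, T₂ z ∂(Pn.prod π) ≤ C * (√(Real.pi / b) / 2) := by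
    rw [integral_empiricalMean_comp_prodMap_eval Pn μ hN
      (f := fun q => |ηhat q.1 q.2 - η q.2|) (.of_forall_mem_Icc hZ.aestronglyMeasurable hZ01)]
    exact integral_le_of_gaussian_tail Pn μ hZ hZ01 hb hconc
  have hT₃ : ∫ z, T₃ z.2 ∂(Pn.prod π) ≤ 1 / (2 * √N) := by
    simpa [integral_fun_snd] using integral_survivalDist_le μ hη hN
  calc ∫ z, |θstar - θhat z| ∂(Pn.prod π)
      ≤ ∫ z, (T₁ z.2 + 2 * T₂ z + T₃ z.2) / p ∂(Pn.prod π) :=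
        integral_mono_of_nonneg (ae_of_all _ fun _ => abs_nonneg _)
          (((hT₁i.add (hT₂i.const_mul 2)).add hT₃i).div_const p) (ae_of_all _ hkey)
    _ = ((∫ z, T₁ z.2 ∂(Pn.prod π)) + 2 * (∫ z, T₂ z ∂(Pn.prod π)) +
          ∫ z, T₃ z.2 ∂(Pn.prod π)) / p := by
        rw [integral_div, integral_add (f := fun z => T₁ z.2 + 2 * T₂ z)
          (hT₁i.add (hT₂i.const_mul 2)) hT₃i, integral_add hT₁i (hT₂i.const_mul 2),
          integral_const_mul]
    _ ≤ (1 / (2 * √N) + 2 * (C * (√(Real.pi / b) / 2)) + 1 / (2 * √N)) / p := by gcongr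
    _ = (1 / √N + C * √(Real.pi / b)) / p := by ring

theorem statement13_general (C0 C1 C2 p : ℝ) (hC1 : 0 < C1)
    (hC2 : 0 < C2) (hp : 0 < p) :
    ∃ C > (0 : ℝ), ∀ (d : ℕ) (α δ0 : ℝ), 0 < α → δ0 ∈ Ioc (0 : ℝ) (1 / 12) →
      ∀ (μ : Measure (EuclideanSpace ℝ (Fin d))) (_ : IsProbabilityMeasure μ)
        (Ω : Type) (_ : MeasurableSpace Ω) (Pn : Measure Ω)
        (_ : IsProbabilityMeasure Pn)
        (η : EuclideanSpace ℝ (Fin d) → ℝ)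
        (ηhat : Ω → EuclideanSpace ℝ (Fin d) → ℝ)
        (θstar a : ℝ) (N : ℕ)
        (θhat : Ω × (Fin N → EuclideanSpace ℝ (Fin d)) → ℝ),
      0 < a → 1 ≤ N →
      Measurable η → (∀ x, η x ∈ Icc (0 : ℝ) 1) →
      Measurable (fun z : Ω × EuclideanSpace ℝ (Fin d) => ηhat z.1 z.2) →
      (∀ ω x, ηhat ω x ∈ Icc (0 : ℝ) 1) →
      Measurable θhat →
      p ≤ ∫ x, η x ∂μ →
      θstar ∈ Icc (0 : ℝ) 1 →
      θstar * ∫ x, η x ∂μ = ∫ x, max (η x - θstar) 0 ∂μ →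
      (∀ δ ∈ Ioc (0 : ℝ) δ0,
        (μ {x | 0 < |η x - θstar| ∧ |η x - θstar| ≤ δ}).toReal ≤ C0 * δ ^ α) →
      (∀ t > (0 : ℝ), ∀ᵐ x ∂μ,
        (Pn {ω | t ≤ |ηhat ω x - η x|}).toReal ≤ C1 * Real.exp (-C2 * a * t ^ 2)) →
      (∀ z : Ω × (Fin N → EuclideanSpace ℝ (Fin d)), θhat z ∈ Icc (0 : ℝ) 1) →
      (∀ z : Ω × (Fin N → EuclideanSpace ℝ (Fin d)),
        θhat z * ((1 / (N : ℝ)) * ∑ i : Fin N, ηhat z.1 (z.2 i)) =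
          (1 / (N : ℝ)) * ∑ i : Fin N, max (ηhat z.1 (z.2 i) - θhat z) 0) →
      ∫ z, |θstar - θhat z| ∂(Pn.prod (Measure.pi fun _ : Fin N => μ)) ≤
        C * (a ^ (-(1 : ℝ) / 2) + (N : ℝ) ^ (-(1 : ℝ) / 2)) := by
  refine ⟨(1 + C1 * √(Real.pi / C2)) / p, by positivity, ?_⟩
  intro d α δ0 _ _ μ _ Ω _ Pn _ η ηhat θstar a N θhat ha hN hη hη01 hηhat hηhat01 _ hpI _ hθstar _
    hconc hθhat01 hθhat
  have hbound := integral_abs_sub_threshold_le μ Pn hp (mul_pos hC2 ha) hN hη hη01 hηhat hηhat01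
    hpI hθstar (fun t ht => by simpa only [neg_mul C2 a, measureReal_def] using hconc t ht)
    hθhat01 hθhat
  have hrpow : ∀ x : ℝ, 0 ≤ x → x ^ (-(1 : ℝ) / 2) = 1 / √x := fun x hx => by
    rw [neg_div, Real.rpow_neg hx, Real.sqrt_eq_rpow]
    exact (one_div _).symm
  rw [← div_div, Real.sqrt_div' _ ha.le] at hbound
  rw [hrpow a ha.le, hrpow N (Nat.cast_nonneg N), div_mul_eq_mul_div]
  have hK : 0 ≤ C1 * √(Real.pi / C2) := by positivity
  have hu : 0 ≤ 1 / √a := by positivity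
  have hv : 0 ≤ 1 / √(N : ℝ) := by positivity
  refine hbound.trans ?_
  rw [mul_div_assoc', ← mul_one_div (C1 * _)]
  gcongr
  nlinarith [mul_nonneg hK hv]

theorem statement13 (C0 C1 C2 p : ℝ) (hC0 : 0 < C0) (hC1 : 0 < C1)
    (hC2 : 0 < C2) (hp : 0 < p) :
    ∃ C > (0 : ℝ), ∀ (d : ℕ) (α δ0 : ℝ), 0 < α → δ0 ∈ Ioc (0 : ℝ) (1 / 12) →
      ∀ (μ : Measure (EuclideanSpace ℝ (Fin d))) (_ : IsProbabilityMeasure μ)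
        (Ω : Type) (_ : MeasurableSpace Ω) (Pn : Measure Ω)
        (_ : IsProbabilityMeasure Pn)
        (η : EuclideanSpace ℝ (Fin d) → ℝ)
        (ηhat : Ω → EuclideanSpace ℝ (Fin d) → ℝ)
        (θstar a : ℝ) (N : ℕ)
        (θhat : Ω × (Fin N → EuclideanSpace ℝ (Fin d)) → ℝ),
      0 < a → 1 ≤ N →
      Measurable η → (∀ x, η x ∈ Icc (0 : ℝ) 1) →
      Measurable (fun z : Ω × EuclideanSpace ℝ (Fin d) => ηhat z.1 z.2) →
      (∀ ω x, ηhat ω x ∈ Icc (0 : ℝ) 1) →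
      Measurable θhat →
      p ≤ ∫ x, η x ∂μ →
      θstar ∈ Icc (0 : ℝ) 1 →
      θstar * ∫ x, η x ∂μ = ∫ x, max (η x - θstar) 0 ∂μ →
      (∀ δ ∈ Ioc (0 : ℝ) δ0,
        (μ {x | 0 < |η x - θstar| ∧ |η x - θstar| ≤ δ}).toReal ≤ C0 * δ ^ α) →
      (∀ t > (0 : ℝ), ∀ᵐ x ∂μ,
        (Pn {ω | t ≤ |ηhat ω x - η x|}).toReal ≤ C1 * Real.exp (-C2 * a * t ^ 2)) →
      (∀ z : Ω × (Fin N → EuclideanSpace ℝ (Fin d)), θhat z ∈ Icc (0 : ℝ) 1) →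
      (∀ z : Ω × (Fin N → EuclideanSpace ℝ (Fin d)),
        θhat z * ((1 / (N : ℝ)) * ∑ i : Fin N, ηhat z.1 (z.2 i)) =
          (1 / (N : ℝ)) * ∑ i : Fin N, max (ηhat z.1 (z.2 i) - θhat z) 0) →
      ∫ z, |θstar - θhat z| ∂(Pn.prod (Measure.pi fun _ : Fin N => μ)) ≤
        C * (a ^ (-(1 : ℝ) / 2) + (N : ℝ) ^ (-(1 : ℝ) / 2)) :=
  statement13_general C0 C1 C2 p hC1 hC2 hp
end
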